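/- arXiv:2307.04393 — 3 statements merged into one kernel-verified Lean document; each statement's English description precedes it below -/
import Mathlib

section
/- Let K ⊂ ℝⁿ be a compact set and let z ∈ ℝⁿ be such that both 0 and z belong to the interior of the convex hull of K. Then (K − z)° = F_{−z}(K°), where F_{−z}(y) = y/(1 − ⟨y,z⟩), and consequently |(K − z)°| = ∫_{K°} (1 − ⟨z,x⟩)^{−(n+1)} dx. -/
open MeasureTheory Set
open scoped RealInnerProductSpace ENNReal

/-- The polar of a set `A ⊆ ℝⁿ`: `A° = {y : ⟨x,y⟩ ≤ 1 for all x ∈ A}`. -/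
def polarSet {n : ℕ} (A : Set (EuclideanSpace ℝ (Fin n))) : Set (EuclideanSpace ℝ (Fin n)) :=
  {y | ∀ x ∈ A, ⟪x, y⟫ ≤ 1}

/-! For `w` with `1 - ⟪w, z⟫ > 0`, scaling the inequality `⟪x, w⟫ ≤ 1` by `1 / (1 - ⟪w, z⟫)` turns
it into `⟪x - z, F_{-z} w⟫ ≤ 1`, so `F_{-z}` maps `K°` into `(K - z)°` and its inverse `F_z` maps
`(K - z)°` back. The positivity of `1 - ⟪w, z⟫` on `K°` (and of `1 + ⟪y, z⟫` on `(K - z)°`) holds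
because `z` (resp. `0`) is an interior point of the convex hull, on which polar vectors satisfy
`⟪x, w⟫ ≤ 1`. The volume formula is the change of variables along `F_{-z}`, whose differential
at `w` is `(1 - ⟪w, z⟫)⁻¹` times a transvection of determinant `(1 - ⟪w, z⟫)⁻¹`. -/

section ProjectiveMap

variable {E : Type*} [NormedAddCommGroup E] [InnerProductSpace ℝ E]

/-- The map `F_z` of the paper. -/
noncomputable def projectiveMap (z y : E) : E := (1 + ⟪y, z⟫)⁻¹ • y

lemma projectiveMap_neg_apply (z y : E) : projectiveMap (-z) y = (1 - ⟪y, z⟫)⁻¹ • y := by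
  rw [projectiveMap, inner_neg_right, ← sub_eq_add_neg]

lemma one_add_inner_projectiveMap_neg {z y : E} (hy : 1 + ⟪y, z⟫ ≠ 0) :
    1 + ⟪projectiveMap z y, -z⟫ = (1 + ⟪y, z⟫)⁻¹ := by
  rw [projectiveMap, inner_neg_right, real_inner_smul_left]
  field_simp
  ring

lemma projectiveMap_neg_projectiveMap {z y : E} (hy : 1 + ⟪y, z⟫ ≠ 0) :
    projectiveMap (-z) (projectiveMap z y) = y := by
  rw [projectiveMap, one_add_inner_projectiveMap_neg hy, inv_inv, projectiveMap,
    smul_inv_smul₀ hy]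

lemma injOn_projectiveMap (z : E) : InjOn (projectiveMap z) {y | 1 + ⟪y, z⟫ ≠ 0} :=
  LeftInvOn.injOn fun _ hy => projectiveMap_neg_projectiveMap hy

lemma hasFDerivAt_projectiveMap {z y : E} (hy : 1 + ⟪y, z⟫ ≠ 0) :
    HasFDerivAt (projectiveMap z) ((1 + ⟪y, z⟫)⁻¹ • (ContinuousLinearMap.id ℝ E +
      (-(1 + ⟪y, z⟫)⁻¹ • innerSL ℝ z).smulRight y)) y := by
  have hden : HasFDerivAt (fun v : E => 1 + ⟪v, z⟫) (innerSL ℝ z) y := by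
    have hinner : (fun v : E => 1 + ⟪v, z⟫) = fun v => 1 + innerSL ℝ z v := by
      funext v
      rw [innerSL_apply_apply, real_inner_comm]
    rw [hinner]
    exact ((innerSL ℝ z).hasFDerivAt).const_add 1
  convert ((hasFDerivAt_inv hy).comp y hden).smul (hasFDerivAt_id y) using 1
  · rfl
  ext v
  simp only [smul_apply, add_apply,
    ContinuousLinearMap.smulRight_apply, ContinuousLinearMap.comp_apply,
    ContinuousLinearMap.toSpanSingleton_apply, ContinuousLinearMap.id_apply,
    innerSL_apply_apply, Function.comp_apply, id, smul_add, smul_smul, smul_eq_mul]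
  congr 2
  field_simp

lemma det_fderiv_projectiveMap [FiniteDimensional ℝ E] {z y : E} (hy : 1 + ⟪y, z⟫ ≠ 0) :
    ((1 + ⟪y, z⟫)⁻¹ • (ContinuousLinearMap.id ℝ E +
      (-(1 + ⟪y, z⟫)⁻¹ • innerSL ℝ z).smulRight y)).det
      = ((1 + ⟪y, z⟫) ^ (Module.finrank ℝ E + 1))⁻¹ := by
  -- `id + f.smulRight y` is the transvection `x ↦ x + f x • y`, of determinant `1 + f y`.
  have htransvection : ((ContinuousLinearMap.id ℝ E +
      (-(1 + ⟪y, z⟫)⁻¹ • innerSL ℝ z).smulRight y : E →L[ℝ] E) : E →ₗ[ℝ] E)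
      = LinearMap.transvection (-(1 + ⟪y, z⟫)⁻¹ • (innerSL ℝ z : E →ₗ[ℝ] ℝ)) y := by
    ext v
    simp [LinearMap.transvection.apply]
  rw [ContinuousLinearMap.det, ContinuousLinearMap.toLinearMap_smul, LinearMap.det_smul,
    htransvection, LinearMap.transvection.det]
  simp only [LinearMap.smul_apply, ContinuousLinearMap.coe_coe, innerSL_apply_apply, smul_eq_mul,
    real_inner_comm y z]
  rw [pow_succ, mul_inv, inv_pow]
  congr 1
  field_simp
  ring

variable [FiniteDimensional ℝ E] [MeasurableSpace E] [BorelSpace E]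

theorem addHaar_image_projectiveMap (μ : Measure E) [μ.IsAddHaarMeasure] {z : E} {s : Set E}
    (hs : MeasurableSet s) (hpos : ∀ y ∈ s, 0 < 1 + ⟪y, z⟫) :
    μ (projectiveMap z '' s)
      = ∫⁻ y in s, ENNReal.ofReal (((1 + ⟪y, z⟫) ^ (Module.finrank ℝ E + 1))⁻¹) ∂μ := by
  rw [← lintegral_abs_det_fderiv_eq_addHaar_image μ hs
    (fun y hy => (hasFDerivAt_projectiveMap (hpos y hy).ne').hasFDerivWithinAt)
    ((injOn_projectiveMap z).mono fun y hy => (hpos y hy).ne')]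
  refine setLIntegral_congr_fun hs fun y hy => ?_
  rw [det_fderiv_projectiveMap (hpos y hy).ne', abs_of_pos (inv_pos.2 (pow_pos (hpos y hy) _))]

end ProjectiveMap

section Polar

variable {n : ℕ}

lemma isClosed_polarSet (A : Set (EuclideanSpace ℝ (Fin n))) : IsClosed (polarSet A) := by
  simp only [polarSet, ofPred_forall]
  exact isClosed_biInter fun x _ => isClosed_le (continuous_const.inner continuous_id)
    continuous_const

lemma polarSet_convexHull (A : Set (EuclideanSpace ℝ (Fin n))) :
    polarSet (convexHull ℝ A) = polarSet A := by
  refine Subset.antisymm (fun y hy x hx => hy x (subset_convexHull ℝ A hx)) fun y hy x hx => ?_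
  have hconvex : Convex ℝ {x : EuclideanSpace ℝ (Fin n) | ⟪x, y⟫ ≤ 1} :=
    convex_halfSpace_le ⟨fun a b => inner_add_left a b y,
      fun c a => real_inner_smul_left a y c⟩ 1
  exact convexHull_min hy hconvex hx

lemma inner_lt_one_of_mem_interior {A : Set (EuclideanSpace ℝ (Fin n))}
    {w y : EuclideanSpace ℝ (Fin n)} (hw : w ∈ interior A) (hy : y ∈ polarSet A) :
    ⟪w, y⟫ < 1 := by
  rcases eq_or_ne y 0 with rfl | hy0
  · simp
  have hsub : interior A ⊆ innerSL ℝ y ⁻¹' Iio 1 := by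
    have hf0 : innerSL ℝ y ≠ 0 := fun h => hy0 (by simpa using congrArg (· y) h)
    rw [← interior_Iic, ((innerSL ℝ y).isOpenMap_of_ne_zero hf0)
      |>.preimage_interior_eq_interior_preimage (innerSL ℝ y).continuous]
    exact interior_mono fun x hx => by simpa [real_inner_comm] using hy x hx
  simpa [real_inner_comm] using hsub hw

lemma one_add_inner_neg_pos {A : Set (EuclideanSpace ℝ (Fin n))}
    {w y : EuclideanSpace ℝ (Fin n)} (hw : w ∈ interior (convexHull ℝ A))
    (hy : y ∈ polarSet A) : 0 < 1 + ⟪y, -w⟫ := by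
  have := inner_lt_one_of_mem_interior hw ((polarSet_convexHull A).symm ▸ hy)
  rw [inner_neg_right, real_inner_comm]
  linarith

open scoped Pointwise in
lemma sub_mem_interior_convexHull_image_sub {A : Set (EuclideanSpace ℝ (Fin n))}
    {w : EuclideanSpace ℝ (Fin n)} (hw : w ∈ interior (convexHull ℝ A))
    (z : EuclideanSpace ℝ (Fin n)) :
    w - z ∈ interior (convexHull ℝ ((· - z) '' A)) := by
  have htranslate : (· - z) '' A = (-z) +ᵥ A := by
    rw [← image_vadd]
    exact image_congr fun x _ => by rw [vadd_eq_add, neg_add_eq_sub]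
  rw [htranslate, convexHull_vadd, interior_vadd, sub_eq_neg_add]
  exact vadd_mem_vadd_set hw

lemma projectiveMap_neg_mem_polarSet_image_sub_iff {K : Set (EuclideanSpace ℝ (Fin n))}
    {z w : EuclideanSpace ℝ (Fin n)} (hw : 0 < 1 + ⟪w, -z⟫) :
    projectiveMap (-z) w ∈ polarSet ((· - z) '' K) ↔ w ∈ polarSet K := by
  simp only [polarSet, mem_ofPred_eq, forall_mem_image]
  refine forall₂_congr fun x _ => ?_
  rw [projectiveMap, real_inner_smul_right, inv_mul_le_iff₀ hw, inner_sub_left, inner_neg_right,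
    real_inner_comm z]
  constructor <;> intro h <;> linarith

theorem polarSet_image_sub {K : Set (EuclideanSpace ℝ (Fin n))} {z : EuclideanSpace ℝ (Fin n)}
    (h0 : 0 ∈ interior (convexHull ℝ K)) (hz : z ∈ interior (convexHull ℝ K)) :
    polarSet ((· - z) '' K) = projectiveMap (-z) '' polarSet K := by
  refine Subset.antisymm (fun y hy => ?_) ?_
  · have hy_pos : 0 < 1 + ⟪y, z⟫ := by
      simpa using one_add_inner_neg_pos (sub_mem_interior_convexHull_image_sub h0 z) hy
    have hinv := projectiveMap_neg_projectiveMap hy_pos.ne'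
    refine ⟨projectiveMap z y, ?_, hinv⟩
    rw [← projectiveMap_neg_mem_polarSet_image_sub_iff, hinv]
    · exact hy
    · rw [one_add_inner_projectiveMap_neg hy_pos.ne']
      exact inv_pos.2 hy_pos
  · rintro _ ⟨w, hw, rfl⟩
    exact (projectiveMap_neg_mem_polarSet_image_sub_iff (one_add_inner_neg_pos hz hw)).2 hw

end Polar

theorem polar_translate_general (n : ℕ) (K : Set (EuclideanSpace ℝ (Fin n)))
    (z : EuclideanSpace ℝ (Fin n))
    (h0 : (0 : EuclideanSpace ℝ (Fin n)) ∈ interior (convexHull ℝ K))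
    (hz : z ∈ interior (convexHull ℝ K)) :
    polarSet ((fun x => x - z) '' K)
        = (fun y => (1 - ⟪y, z⟫)⁻¹ • y) '' polarSet K ∧
    volume (polarSet ((fun x => x - z) '' K))
        = ∫⁻ x in polarSet K, ENNReal.ofReal (((1 - ⟪z, x⟫) ^ (n + 1))⁻¹) := by
  have hF : (fun y => (1 - ⟪y, z⟫)⁻¹ • y) = projectiveMap (-z) :=
    funext fun y => (projectiveMap_neg_apply z y).symm
  refine ⟨hF ▸ polarSet_image_sub h0 hz, ?_⟩
  rw [polarSet_image_sub h0 hz,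
    addHaar_image_projectiveMap volume (isClosed_polarSet K).measurableSet
      fun w hw => one_add_inner_neg_pos hz hw,
    finrank_euclideanSpace_fin]
  simp_rw [inner_neg_right, ← sub_eq_add_neg, real_inner_comm z]

/-- If `K ⊆ ℝⁿ` is compact and `0, z` belong to the interior of the convex hull of `K`, then
`(K − z)° = F_{−z}(K°)` where `F_{−z}(y) = y/(1 − ⟨y,z⟩)`, and consequently
`|(K − z)°| = ∫_{K°} (1 − ⟨z,x⟩)^{−(n+1)} dx`. -/
theorem polar_translate (n : ℕ) (K : Set (EuclideanSpace ℝ (Fin n)))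
    (hKcomp : IsCompact K) (z : EuclideanSpace ℝ (Fin n))
    (h0 : (0 : EuclideanSpace ℝ (Fin n)) ∈ interior (convexHull ℝ K))
    (hz : z ∈ interior (convexHull ℝ K)) :
    polarSet ((fun x => x - z) '' K)
        = (fun y => (1 - ⟪y, z⟫)⁻¹ • y) '' polarSet K ∧
    volume (polarSet ((fun x => x - z) '' K))
        = ∫⁻ x in polarSet K, ENNReal.ofReal (((1 - ⟪z, x⟫) ^ (n + 1))⁻¹) :=
  polar_translate_general n K z h0 hz
end

section
/- Let f : ℝⁿ → (0,∞) ∪ {+∞} be convex and lower semicontinuous, with lim_{t→+∞} f(tx) = +∞ for every x ≠ 0, and whose effective domain has nonempty interior. Then the set C(f) = {(x,s) ∈ ℝⁿ × ℝ : f̂(x,s) ≤ 1} is convex if and only if for every x ≠ 0 the function t ↦ f(tx)/t is nonincreasing on (0,+∞). -/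
open MeasureTheory Set Filter
open scoped RealInnerProductSpace ENNReal Topology

/-- The perspective function `f̂(x,s) = |s|·f(x/|s|)` for `s ≠ 0`, and
`f̂(x,0) = lim_{s→0⁺} s·f(x/s)` (the limit exists by convexity; it is here encoded as a
`limsup`, which agrees with the limit whenever the latter exists). -/
noncomputable def persp {n : ℕ} (f : EuclideanSpace ℝ (Fin n) → ℝ≥0∞)
    (p : EuclideanSpace ℝ (Fin n) × ℝ) : ℝ≥0∞ :=
  if p.2 = 0 then
    Filter.limsup (fun s : ℝ => ENNReal.ofReal s * f (s⁻¹ • p.1)) (nhdsWithin 0 (Set.Ioi 0))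
  else ENNReal.ofReal |p.2| * f (|p.2|⁻¹ • p.1)

/-- The perspective body `C(f) = {(x,s) ∈ ℝⁿ × ℝ : f̂(x,s) ≤ 1}`. -/
noncomputable def perspBody {n : ℕ} (f : EuclideanSpace ℝ (Fin n) → ℝ≥0∞) :
    Set (EuclideanSpace ℝ (Fin n) × ℝ) :=
  {p | persp f p ≤ 1}

/-! For `t > 0` we have `f(tx)/t = f̂(x, 1/t)`, so the condition on `f` says exactly that
`σ ↦ f̂(x,σ)` is nondecreasing on `(0,∞)`.

If `C(f)` is convex, then with `(x, σ)` it contains `(x, -σ)`, since `f̂` is even in `s`, and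
hence the whole vertical segment between them. By positive homogeneity of `f̂` the same holds
for every sublevel set `{f̂ ≤ c}`, so `f̂(x,σ') ≤ c` whenever `|σ'| ≤ σ` and `f̂(x,σ) ≤ c`.

Conversely, `f̂` is jointly convex on the open half-space `s > 0`. Monotonicity lets us replace
`|a s₁ + b s₂|` by the larger `a |s₁| + b |s₂|`, and a point with `s = 0` in `C(f)` is approached,
through the `limsup` defining `f̂(x,0)`, by points with `s > 0` at which `f̂` is almost `≤ 1`. -/

open scoped NNReal

section

variable {n : ℕ} (f : EuclideanSpace ℝ (Fin n) → ℝ≥0∞)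

lemma mem_perspBody {p : EuclideanSpace ℝ (Fin n) × ℝ} : p ∈ perspBody f ↔ persp f p ≤ 1 :=
  Iff.rfl

lemma persp_of_pos (x : EuclideanSpace ℝ (Fin n)) {s : ℝ} (hs : 0 < s) :
    persp f (x, s) = ENNReal.ofReal s * f (s⁻¹ • x) := by
  simp [persp, hs.ne', abs_of_pos hs]

lemma persp_zero_right (x : EuclideanSpace ℝ (Fin n)) :
    persp f (x, 0) = limsup (fun s : ℝ => ENNReal.ofReal s * f (s⁻¹ • x)) (𝓝[>] 0) := by
  simp [persp]

lemma persp_abs (x : EuclideanSpace ℝ (Fin n)) (s : ℝ) : persp f (x, |s|) = persp f (x, s) := by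
  rcases eq_or_ne s 0 with rfl | hs
  · simp
  · simp [persp, hs, abs_abs]

lemma persp_neg (x : EuclideanSpace ℝ (Fin n)) (s : ℝ) : persp f (x, -s) = persp f (x, s) := by
  rw [← persp_abs, abs_neg, persp_abs]

lemma persp_smul (x : EuclideanSpace ℝ (Fin n)) {r s : ℝ} (hr : 0 < r) (hs : s ≠ 0) :
    persp f (r • x, r * s) = ENNReal.ofReal r * persp f (x, s) := by
  have hrs : |r * s| = r * |s| := by rw [abs_mul, abs_of_pos hr]
  simp only [persp, hs, hr.ne', mul_eq_zero, or_self, if_false, hrs]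
  rw [ENNReal.ofReal_mul hr.le, mul_assoc, smul_smul, mul_inv_rev, mul_assoc,
    inv_mul_cancel₀ hr.ne', mul_one]

lemma persp_le_coe_iff (x : EuclideanSpace ℝ (Fin n)) {s : ℝ} (hs : s ≠ 0) {r : ℝ≥0}
    (hr : 0 < r) : persp f (x, s) ≤ r ↔ ((r : ℝ)⁻¹ • x, (r : ℝ)⁻¹ * s) ∈ perspBody f := by
  rw [mem_perspBody, persp_smul f x (inv_pos.2 (NNReal.coe_pos.2 hr)) hs,
    ENNReal.ofReal_inv_of_pos (NNReal.coe_pos.2 hr), ENNReal.ofReal_coe_nnreal,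
    ENNReal.inv_mul_le_iff (ENNReal.coe_ne_zero.2 hr.ne') ENNReal.coe_ne_top, mul_one]

lemma persp_inv (x : EuclideanSpace ℝ (Fin n)) {t : ℝ} (ht : 0 < t) :
    persp f (x, t⁻¹) = f (t • x) / ENNReal.ofReal t := by
  rw [persp_of_pos f x (inv_pos.2 ht), inv_inv, ENNReal.ofReal_inv_of_pos ht, div_eq_mul_inv,
    mul_comm]

lemma antitoneOn_div_iff_monotoneOn_persp (x : EuclideanSpace ℝ (Fin n)) :
    AntitoneOn (fun t : ℝ => f (t • x) / ENNReal.ofReal t) (Ioi 0) ↔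
      MonotoneOn (fun s => persp f (x, s)) (Ioi 0) := by
  constructor
  · intro h s (hs : 0 < s) t (ht : 0 < t) hst
    rw [← inv_inv s, ← inv_inv t]
    simp only [persp_inv f x (inv_pos.2 hs), persp_inv f x (inv_pos.2 ht)]
    exact h (inv_pos.2 ht) (inv_pos.2 hs) (inv_anti₀ hs hst)
  · intro h s (hs : 0 < s) t (ht : 0 < t) hst
    simp only [← persp_inv f x hs, ← persp_inv f x ht]
    exact h (inv_pos.2 ht) (inv_pos.2 hs) (inv_anti₀ hs hst)

lemma monotoneOn_persp_zero_left : MonotoneOn (fun s => persp f (0, s)) (Ioi 0) := by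
  intro s (hs : 0 < s) t (ht : 0 < t) hst
  simp only [persp_of_pos f 0 hs, persp_of_pos f 0 ht, smul_zero]
  gcongr

lemma monotoneOn_persp_of_convex (hC : Convex ℝ (perspBody f)) (x : EuclideanSpace ℝ (Fin n)) :
    MonotoneOn (fun s => persp f (x, s)) (Ioi 0) := by
  intro σ' (hσ' : 0 < σ') σ (hσ : 0 < σ) hle
  refine le_of_forall_gt_imp_ge_of_dense fun c hc => ?_
  rcases eq_or_ne c ⊤ with rfl | hc_top
  · exact le_top
  lift c to ℝ≥0 using hc_top
  have hc0 : 0 < c := ENNReal.coe_pos.1 (pos_of_gt hc)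
  set ρ : ℝ := (c : ℝ)⁻¹
  have hρ : 0 < ρ := inv_pos.2 (NNReal.coe_pos.2 hc0)
  have hup : (ρ • x, ρ * σ) ∈ perspBody f := (persp_le_coe_iff f x hσ.ne' hc0).1 hc.le
  have hdown : (ρ • x, -(ρ * σ)) ∈ perspBody f := by
    rwa [mem_perspBody, persp_neg]
  have hseg : (ρ • x, ρ * σ') ∈ segment ℝ (ρ • x, -(ρ * σ)) (ρ • x, ρ * σ) := by
    rw [← Prod.image_mk_segment_right, segment_eq_Icc (by nlinarith)]
    exact ⟨ρ * σ', ⟨by nlinarith, by gcongr⟩, rfl⟩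
  exact (persp_le_coe_iff f x hσ'.ne' hc0).2 (hC.segment_subset hdown hup hseg)

lemma monotoneOn_persp_Ici {x : EuclideanSpace ℝ (Fin n)}
    (hmono : MonotoneOn (fun s => persp f (x, s)) (Ioi 0)) :
    MonotoneOn (fun s => persp f (x, s)) (Ici 0) := by
  intro s (hs : 0 ≤ s) t (ht : 0 ≤ t) hst
  rcases hs.lt_or_eq with hs | rfl
  · exact hmono hs (hs.trans_le hst) hst
  rcases ht.lt_or_eq with ht | rfl
  · simp only [persp_zero_right]
    refine limsup_le_of_le (by isBoundedDefault) ?_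
    filter_upwards [eventually_nhdsWithin_of_eventually_nhds (eventually_lt_nhds ht),
      self_mem_nhdsWithin] with u hut (hu : 0 < u)
    rw [← persp_of_pos f x hu]
    exact hmono hu ht hut.le
  · rfl

lemma exists_pos_ge_persp_lt {x : EuclideanSpace ℝ (Fin n)} {s : ℝ} (hs : 0 ≤ s) {c : ℝ≥0∞}
    (hc : persp f (x, s) < c) : ∃ t, 0 < t ∧ s ≤ t ∧ persp f (x, t) < c := by
  rcases hs.lt_or_eq with hs | rfl
  · exact ⟨s, hs, le_rfl, hc⟩
  rw [persp_zero_right] at hc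
  obtain ⟨t, htc, ht⟩ := ((eventually_lt_of_limsup_lt hc).and self_mem_nhdsWithin).exists
  exact ⟨t, ht, ht.le, by rwa [persp_of_pos f x ht]⟩

lemma persp_combo_le (hfconv : ∀ x y : EuclideanSpace ℝ (Fin n), ∀ a b : ℝ, 0 ≤ a → 0 ≤ b →
      a + b = 1 → f (a • x + b • y) ≤ ENNReal.ofReal a * f x + ENNReal.ofReal b * f y)
    (x₁ x₂ : EuclideanSpace ℝ (Fin n)) {s₁ s₂ a b : ℝ} (hs₁ : 0 < s₁) (hs₂ : 0 < s₂)
    (ha : 0 ≤ a) (hb : 0 ≤ b) (hab : a + b = 1) :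
    persp f (a • x₁ + b • x₂, a * s₁ + b * s₂) ≤
      ENNReal.ofReal a * persp f (x₁, s₁) + ENNReal.ofReal b * persp f (x₂, s₂) := by
  set S := a * s₁ + b * s₂
  have hS : 0 < S := convex_Ioi (0 : ℝ) hs₁ hs₂ ha hb hab
  -- `x/S` is the convex combination of `x₁/s₁` and `x₂/s₂` with weights `a s₁/S` and `b s₂/S`
  have hx : S⁻¹ • (a • x₁ + b • x₂) =
      (a * s₁ / S) • (s₁⁻¹ • x₁) + (b * s₂ / S) • (s₂⁻¹ • x₂) := by
    simp only [smul_add, smul_smul]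
    congr 2 <;> field_simp
  have hw : ∀ {c s : ℝ}, 0 ≤ c →
      ENNReal.ofReal S * ENNReal.ofReal (c * s / S) = ENNReal.ofReal c * ENNReal.ofReal s :=
    fun hc => by rw [← ENNReal.ofReal_mul hS.le, ← ENNReal.ofReal_mul hc, mul_div_cancel₀ _ hS.ne']
  rw [persp_of_pos f _ hS, persp_of_pos f _ hs₁, persp_of_pos f _ hs₂, hx]
  calc ENNReal.ofReal S * f ((a * s₁ / S) • (s₁⁻¹ • x₁) + (b * s₂ / S) • (s₂⁻¹ • x₂))
      ≤ ENNReal.ofReal S * (ENNReal.ofReal (a * s₁ / S) * f (s₁⁻¹ • x₁) +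
          ENNReal.ofReal (b * s₂ / S) * f (s₂⁻¹ • x₂)) := by
        gcongr
        exact hfconv _ _ _ _ (by positivity) (by positivity)
          (by rw [← add_div, div_self hS.ne'])
    _ = _ := by rw [mul_add, ← mul_assoc, ← mul_assoc, hw ha, hw hb, mul_assoc, mul_assoc]

lemma convex_perspBody_of_monotoneOn
    (hfconv : ∀ x y : EuclideanSpace ℝ (Fin n), ∀ a b : ℝ, 0 ≤ a → 0 ≤ b →
      a + b = 1 → f (a • x + b • y) ≤ ENNReal.ofReal a * f x + ENNReal.ofReal b * f y)
    (hmono : ∀ x, MonotoneOn (fun s => persp f (x, s)) (Ioi 0)) :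
    Convex ℝ (perspBody f) := by
  rintro ⟨x₁, s₁⟩ h₁ ⟨x₂, s₂⟩ h₂ a b ha hb hab
  rw [mem_perspBody] at h₁ h₂ ⊢
  rw [Prod.smul_mk, Prod.smul_mk, Prod.mk_add_mk, smul_eq_mul, smul_eq_mul, ← persp_abs]
  refine le_of_forall_gt_imp_ge_of_dense fun c hc => ?_
  obtain ⟨t₁, ht₁, hst₁, hlt₁⟩ :=
    exists_pos_ge_persp_lt f (abs_nonneg s₁) ((persp_abs f x₁ s₁ ▸ h₁).trans_lt hc)
  obtain ⟨t₂, ht₂, hst₂, hlt₂⟩ :=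
    exists_pos_ge_persp_lt f (abs_nonneg s₂) ((persp_abs f x₂ s₂ ▸ h₂).trans_lt hc)
  have habs : |a * s₁ + b * s₂| ≤ a * t₁ + b * t₂ := by
    refine (abs_add_le _ _).trans ?_
    rw [abs_mul, abs_mul, abs_of_nonneg ha, abs_of_nonneg hb]
    gcongr
  calc persp f (a • x₁ + b • x₂, |a * s₁ + b * s₂|)
      ≤ persp f (a • x₁ + b • x₂, a * t₁ + b * t₂) :=
        monotoneOn_persp_Ici f (hmono _) (mem_Ici.2 (abs_nonneg _)) (mem_Ici.2 (by positivity))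
          habs
    _ ≤ ENNReal.ofReal a * persp f (x₁, t₁) + ENNReal.ofReal b * persp f (x₂, t₂) :=
        persp_combo_le f hfconv x₁ x₂ ht₁ ht₂ ha hb hab
    _ ≤ ENNReal.ofReal a * c + ENNReal.ofReal b * c := by gcongr
    _ = c := by rw [← add_mul, ← ENNReal.ofReal_add ha hb, hab, ENNReal.ofReal_one, one_mul]

end

theorem perspBody_convex_iff_general (n : ℕ) (f : EuclideanSpace ℝ (Fin n) → ℝ≥0∞)
    (hfconv : ∀ x y : EuclideanSpace ℝ (Fin n), ∀ a b : ℝ, 0 ≤ a → 0 ≤ b → a + b = 1 →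
      f (a • x + b • y) ≤ ENNReal.ofReal a * f x + ENNReal.ofReal b * f y) :
    Convex ℝ (perspBody f)
      ↔ ∀ x : EuclideanSpace ℝ (Fin n), x ≠ 0 →
          AntitoneOn (fun t : ℝ => f (t • x) / ENNReal.ofReal t) (Set.Ioi 0) := by
  refine ⟨fun hC x _ => (antitoneOn_div_iff_monotoneOn_persp f x).2
    (monotoneOn_persp_of_convex f hC x), fun hmono => ?_⟩
  refine convex_perspBody_of_monotoneOn f hfconv fun x => ?_
  rcases eq_or_ne x 0 with rfl | hx
  · exact monotoneOn_persp_zero_left f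
  · exact (antitoneOn_div_iff_monotoneOn_persp f x).1 (hmono x hx)

/-- If `f : ℝⁿ → (0,∞) ∪ {+∞}` is convex, lower semicontinuous, with `f(tx) → +∞` as
`t → +∞` for every `x ≠ 0`, and `dom(f)` has nonempty interior, then the perspective body
`C(f)` is convex iff for every `x ≠ 0` the map `t ↦ f(tx)/t` is nonincreasing on `(0,∞)`. -/
theorem perspBody_convex_iff (n : ℕ) (f : EuclideanSpace ℝ (Fin n) → ℝ≥0∞)
    (hfpos : ∀ x, f x ≠ 0)
    (hfconv : ∀ x y : EuclideanSpace ℝ (Fin n), ∀ a b : ℝ, 0 ≤ a → 0 ≤ b → a + b = 1 →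
      f (a • x + b • y) ≤ ENNReal.ofReal a * f x + ENNReal.ofReal b * f y)
    (hflsc : LowerSemicontinuous f)
    (hftend : ∀ x : EuclideanSpace ℝ (Fin n), x ≠ 0 →
      Tendsto (fun t : ℝ => f (t • x)) atTop (𝓝 ⊤))
    (hdom : (interior {x | f x ≠ ⊤}).Nonempty) :
    Convex ℝ (perspBody f)
      ↔ ∀ x : EuclideanSpace ℝ (Fin n), x ≠ 0 →
          AntitoneOn (fun t : ℝ => f (t • x) / ENNReal.ofReal t) (Set.Ioi 0) :=
  perspBody_convex_iff_general n f hfconv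
end

section
/- Let f : ℝⁿ → (0,∞) ∪ {+∞} be convex and lower semicontinuous, with lim_{t→+∞} f(tx) = +∞ for every x ≠ 0, and whose effective domain has nonempty interior. Then for every m > 0, ∫_{ℝⁿ} f(z)^{−(m+n)} dz = ((m+n)/2) · ∫_{C(f)} |s|^{m−1} ds dx. -/
/-!
Off the null hyperplane `s = 0`, the slice of `C(f)` at height `s` is `|s| • {f ≤ 1/|s|}`, so
scaling each slice turns `∫_{C(f)} |s|^{m-1}` into the integral of `|s|^{m+n-1}` over
`{(z, s) : |s| f(z) ≤ 1}`. Integrating out `s` first there gives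
`∫_{|s| ≤ 1/f(z)} |s|^{m+n-1} ds = (2/(m+n)) f(z)^{-(m+n)}`.
-/

open MeasureTheory Set Filter
open scoped RealInnerProductSpace ENNReal Topology

theorem lintegral_comp_abs (g : ℝ → ℝ≥0∞) : ∫⁻ x, g |x| = 2 * ∫⁻ x in Ioi 0, g x := by
  have hpos : ∫⁻ x in Ioi 0, g |x| = ∫⁻ x in Ioi 0, g x :=
    setLIntegral_congr_fun measurableSet_Ioi fun x hx => by rw [abs_of_pos hx]
  have hneg : ∫⁻ x in Iic 0, g |x| = ∫⁻ x in Ioi 0, g x := by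
    have h := (Measure.measurePreserving_neg (volume : Measure ℝ)).setLIntegral_comp_preimage_emb
      (Homeomorph.neg ℝ).measurableEmbedding (fun x => g |x|) (Ici 0)
    simp only [abs_neg, neg_preimage, neg_Ici, neg_zero] at h
    rw [h, setLIntegral_congr Ioi_ae_eq_Ici.symm, hpos]
  rw [← lintegral_add_compl _ measurableSet_Ioi, compl_Ioi, hpos, hneg, two_mul]

theorem lintegral_rpow_Ioc {p : ℝ} (hp : 0 < p) {r : ℝ} (hr : 0 ≤ r) :
    ∫⁻ s in Ioc 0 r, ENNReal.ofReal (s ^ (p - 1)) = ENNReal.ofReal (r ^ p / p) := by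
  have hint : IntegrableOn (fun s : ℝ => s ^ (p - 1)) (Ioc 0 r) := by
    rw [← intervalIntegrable_iff_integrableOn_Ioc_of_le hr]
    exact intervalIntegral.intervalIntegrable_rpow' (by linarith)
  rw [← ofReal_integral_eq_lintegral_ofReal hint
    (ae_restrict_of_forall_mem measurableSet_Ioc fun s hs => Real.rpow_nonneg hs.1.le _),
    ← intervalIntegral.integral_of_le hr, integral_rpow (Or.inl (by linarith)),
    sub_add_cancel, Real.zero_rpow hp.ne', sub_zero]

theorem lintegral_rpow_Ioi_eq_top (q : ℝ) : ∫⁻ s in Ioi 0, ENNReal.ofReal (s ^ q) = ∞ := by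
  by_contra h
  refine not_integrableOn_Ioi_rpow q ((lintegral_ofReal_ne_top_iff_integrable ?_ ?_).1 h)
  · exact (measurable_id.pow_const _).aestronglyMeasurable
  · exact ae_restrict_of_forall_mem measurableSet_Ioi fun s hs => Real.rpow_nonneg (le_of_lt hs) _

theorem setLIntegral_abs_le_abs_rpow_sub_one {p : ℝ} (hp : 0 < p) (c : ℝ≥0∞) :
    ∫⁻ s in {s : ℝ | ENNReal.ofReal |s| ≤ c}, ENNReal.ofReal (|s| ^ (p - 1))
      = ENNReal.ofReal (2 / p) * c ^ p := by
  set B := {u : ℝ | ENNReal.ofReal u ≤ c}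
  have hB : MeasurableSet B := measurableSet_le ENNReal.measurable_ofReal measurable_const
  calc ∫⁻ s in abs ⁻¹' B, ENNReal.ofReal (|s| ^ (p - 1))
      = ∫⁻ s, B.indicator (fun u => ENNReal.ofReal (u ^ (p - 1))) |s| := by
        rw [← lintegral_indicator (hB.preimage measurable_abs)]; rfl
    _ = 2 * ∫⁻ u in B ∩ Ioi 0, ENNReal.ofReal (u ^ (p - 1)) := by
        rw [lintegral_comp_abs, setLIntegral_indicator hB]
    _ = ENNReal.ofReal (2 / p) * c ^ p := by
      induction c using ENNReal.recTopCoe with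
      | top =>
        simp only [B, le_top, ofPred_true, univ_inter, lintegral_rpow_Ioi_eq_top,
          ENNReal.top_rpow_of_pos hp]
        rw [ENNReal.mul_top two_ne_zero, ENNReal.mul_top (ENNReal.ofReal_pos.2 (by positivity)).ne']
      | coe r =>
        have : {u : ℝ | ENNReal.ofReal u ≤ r} ∩ Ioi 0 = Ioc 0 (r : ℝ) := by
          ext u
          simp [ENNReal.ofReal_le_iff_le_toReal, and_comm]
        rw [this, lintegral_rpow_Ioc hp r.coe_nonneg, ← ENNReal.coe_rpow_of_nonneg _ hp.le,
          ← ENNReal.ofReal_coe_nnreal, NNReal.coe_rpow, ← ENNReal.ofReal_ofNat 2,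
          ← ENNReal.ofReal_mul zero_le_two, ← ENNReal.ofReal_mul (by positivity)]
        ring_nf

theorem setLIntegral_abs_mul_le_one_abs_rpow_sub_one {α : Type*} [MeasurableSpace α]
    (μ : Measure α) [SFinite μ] {f : α → ℝ≥0∞} (hf : Measurable f) {p : ℝ} (hp : 0 < p) :
    ∫⁻ q in {q : α × ℝ | ENNReal.ofReal |q.2| * f q.1 ≤ 1}, ENNReal.ofReal (|q.2| ^ (p - 1))
        ∂μ.prod volume
      = ENNReal.ofReal (2 / p) * ∫⁻ x, f x ^ (-p) ∂μ := by
  have hS : MeasurableSet {q : α × ℝ | ENNReal.ofReal |q.2| * f q.1 ≤ 1} :=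
    measurableSet_le (by fun_prop) measurable_const
  rw [← lintegral_indicator hS, lintegral_prod _ (by fun_prop),
    ← lintegral_const_mul _ (by fun_prop)]
  refine lintegral_congr fun x => ?_
  have hslice : {s : ℝ | ENNReal.ofReal |s| * f x ≤ 1} = {s | ENNReal.ofReal |s| ≤ (f x)⁻¹} := by
    simp only [ENNReal.le_inv_iff_mul_le]
  calc ∫⁻ s, _
        = ∫⁻ s in {s : ℝ | ENNReal.ofReal |s| * f x ≤ 1}, ENNReal.ofReal (|s| ^ (p - 1)) := by
        rw [← lintegral_indicator (measurableSet_le (by fun_prop) measurable_const)]; rfl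
    _ = ENNReal.ofReal (2 / p) * f x ^ (-p) := by
        rw [hslice, setLIntegral_abs_le_abs_rpow_sub_one hp, ENNReal.inv_rpow, ENNReal.rpow_neg]

theorem setLIntegral_prod_comp_snd {α β : Type*} [MeasurableSpace α] [MeasurableSpace β]
    (μ : Measure α) (ν : Measure β) [SFinite μ] [SFinite ν] {S : Set (α × β)}
    (hS : MeasurableSet S) {w : β → ℝ≥0∞} (hw : Measurable w) :
    ∫⁻ q in S, w q.2 ∂μ.prod ν = ∫⁻ y, w y * μ ((fun x => (x, y)) ⁻¹' S) ∂ν := by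
  rw [← lintegral_indicator hS, lintegral_prod_symm _ (by fun_prop)]
  refine lintegral_congr fun y => ?_
  rw [← lintegral_indicator_const (measurable_prodMk_right hS)]
  rfl

def perspBodyOffZero {E : Type*} [SMul ℝ E] (f : E → ℝ≥0∞) : Set (E × ℝ) :=
  {q | q.2 ≠ 0 ∧ ENNReal.ofReal |q.2| * f (|q.2|⁻¹ • q.1) ≤ 1}

theorem measurableSet_perspBodyOffZero {E : Type*} [MeasurableSpace E] [SMul ℝ E]
    [MeasurableSMul₂ ℝ E] {f : E → ℝ≥0∞} (hf : Measurable f) :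
    MeasurableSet (perspBodyOffZero f) :=
  (measurable_snd (measurableSet_singleton 0).compl).inter
    (measurableSet_le (measurable_snd.abs.ennreal_ofReal.mul
      (hf.comp (measurable_snd.abs.inv.smul measurable_fst))) measurable_const)

section AddHaar

variable {E : Type*} [NormedAddCommGroup E] [NormedSpace ℝ E] [MeasurableSpace E] [BorelSpace E]
  [FiniteDimensional ℝ E] (μ : Measure E) [μ.IsAddHaarMeasure] {f : E → ℝ≥0∞}

theorem measure_perspBodyOffZero_slice {s : ℝ} (hs : s ≠ 0) :
    μ ((fun x => (x, s)) ⁻¹' perspBodyOffZero f)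
      = ENNReal.ofReal (|s| ^ Module.finrank ℝ E) * μ {x | ENNReal.ofReal |s| * f x ≤ 1} := by
  have hslice : (fun x => (x, s)) ⁻¹' perspBodyOffZero f
      = (fun x => |s|⁻¹ • x) ⁻¹' {x | ENNReal.ofReal |s| * f x ≤ 1} := by
    ext x
    simp [perspBodyOffZero, hs]
  rw [hslice, Measure.addHaar_preimage_smul μ (inv_ne_zero (abs_ne_zero.2 hs)), inv_pow, inv_inv,
    abs_of_nonneg (by positivity)]

theorem setLIntegral_perspBodyOffZero (hf : Measurable f) (m : ℝ) :
    ∫⁻ q in perspBodyOffZero f, ENNReal.ofReal (|q.2| ^ (m - 1)) ∂μ.prod volume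
      = ∫⁻ q in {q : E × ℝ | ENNReal.ofReal |q.2| * f q.1 ≤ 1},
          ENNReal.ofReal (|q.2| ^ (m + Module.finrank ℝ E - 1)) ∂μ.prod volume := by
  rw [setLIntegral_prod_comp_snd _ _ (measurableSet_perspBodyOffZero hf)
      (w := fun s => ENNReal.ofReal (|s| ^ (m - 1))) (by fun_prop),
    setLIntegral_prod_comp_snd _ _ (measurableSet_le (by fun_prop) measurable_const)
      (w := fun s => ENNReal.ofReal (|s| ^ (m + Module.finrank ℝ E - 1))) (by fun_prop)]
  refine lintegral_congr_ae ?_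
  filter_upwards [Measure.ae_ne volume 0] with s hs
  have habs : 0 < |s| := abs_pos.2 hs
  rw [measure_perspBodyOffZero_slice μ hs, ← mul_assoc, ← ENNReal.ofReal_mul (by positivity),
    ← Real.rpow_natCast, ← Real.rpow_add habs, sub_add_eq_add_sub]
  rfl

end AddHaar

theorem perspBody_ae_eq_perspBodyOffZero {n : ℕ} (f : EuclideanSpace ℝ (Fin n) → ℝ≥0∞) :
    perspBody f =ᵐ[volume] perspBodyOffZero f := by
  refine eventuallyEq_set.2 ?_
  filter_upwards [Measure.quasiMeasurePreserving_snd.ae (Measure.ae_ne volume 0)] with q hq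
  simp [perspBody, persp, perspBodyOffZero, hq]

theorem integral_pow_eq_perspBody_general (n : ℕ) (f : EuclideanSpace ℝ (Fin n) → ℝ≥0∞)
    (hflsc : LowerSemicontinuous f)
    (m : ℝ) (hm : 0 < m) :
    ∫⁻ z, (f z) ^ (-(m + n))
      = ENNReal.ofReal ((m + n) / 2)
        * ∫⁻ p in perspBody f, ENNReal.ofReal (|p.2| ^ (m - 1)) := by
  have hp : 0 < m + n := by positivity
  rw [setLIntegral_congr (perspBody_ae_eq_perspBodyOffZero f), Measure.volume_eq_prod,
    setLIntegral_perspBodyOffZero _ hflsc.measurable, finrank_euclideanSpace_fin,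
    setLIntegral_abs_mul_le_one_abs_rpow_sub_one _ hflsc.measurable hp, ← mul_assoc,
    ← ENNReal.ofReal_mul (by positivity), div_mul_div_cancel₀ two_ne_zero, div_self hp.ne',
    ENNReal.ofReal_one, one_mul]

/-- If `f : ℝⁿ → (0,∞) ∪ {+∞}` is convex, lower semicontinuous, with `f(tx) → +∞` as
`t → +∞` for every `x ≠ 0`, and `dom(f)` has nonempty interior, then for every `m > 0`,
`∫_{ℝⁿ} f(z)^{−(m+n)} dz = ((m+n)/2) · ∫_{C(f)} |s|^{m−1} ds dx` (an identity in `[0,∞]`). -/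
theorem integral_pow_eq_perspBody (n : ℕ) (f : EuclideanSpace ℝ (Fin n) → ℝ≥0∞)
    (hfpos : ∀ x, f x ≠ 0)
    (hfconv : ∀ x y : EuclideanSpace ℝ (Fin n), ∀ a b : ℝ, 0 ≤ a → 0 ≤ b → a + b = 1 →
      f (a • x + b • y) ≤ ENNReal.ofReal a * f x + ENNReal.ofReal b * f y)
    (hflsc : LowerSemicontinuous f)
    (hftend : ∀ x : EuclideanSpace ℝ (Fin n), x ≠ 0 →
      Tendsto (fun t : ℝ => f (t • x)) atTop (𝓝 ⊤))
    (hdom : (interior {x | f x ≠ ⊤}).Nonempty)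
    (m : ℝ) (hm : 0 < m) :
    ∫⁻ z, (f z) ^ (-(m + n))
      = ENNReal.ofReal ((m + n) / 2)
        * ∫⁻ p in perspBody f, ENNReal.ofReal (|p.2| ^ (m - 1)) :=
  integral_pow_eq_perspBody_general n f hflsc m hm
end
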